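/- arXiv:1010.4137 — 2 statements merged into one kernel-verified Lean document; each statement's English description precedes it below -/
import Mathlib

section
/- Let (p_x)_{x∈Z^d} be a reversible nearest-neighbour periodic environment with p_x(e) > 0 for all x and unit vectors e, with potential u and average negative gradient g. Then for every x ∈ Z^d and every m ∈ M = M_1Z × ⋯ × M_dZ, one has u(x + m) = u(x) − ⟨g, m⟩. In particular, the function x ↦ u(x) + ⟨g, x⟩ is M-periodic (hence bounded). -/
/-! The reversibility ratios `log (p_x(e) / p_{x+e}(-e))` are `M`-periodic in `x`, so for a
period `v` the increment `u (x + v) - u x` is unchanged by unit steps and equals `u v`: `u` is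
additive along `M`. Telescoping along the `i`-th axis gives `u (M_i e_i) = -M_i g_i`, so
`x ↦ u x + ⟨g, x⟩` is invariant under the generators `M_i e_i` of `M`, hence under all of `M`. -/

open MeasureTheory Filter Topology ProbabilityTheory

noncomputable section

/-- The torus `T = ℤ^d / (M₁ℤ × ⋯ × M_dℤ)`. -/
abbrev Torus (d : ℕ) (Md : Fin d → ℕ) : Type := ∀ i : Fin d, ZMod (Md i)

/-- Projection of `ℤ^d` onto the torus, `x ↦ x mod M`. -/
def projT {d : ℕ} (Md : Fin d → ℕ) (x : Fin d → ℤ) : Torus d Md :=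
  fun i => (x i : ZMod (Md i))

/-- A canonical representative in `ℤ^d` of a point of the torus. -/
def repT {d : ℕ} (Md : Fin d → ℕ) [∀ i, NeZero (Md i)] (t : Torus d Md) : Fin d → ℤ :=
  fun i => ((t i).val : ℤ)

/-- `p` is a periodic environment on `ℤ^d`: each `p x` is a probability distribution
on `ℤ^d` (the jump distribution at `x`), and `x ↦ p x` is `M`-periodic. -/
def IsPeriodicEnv {d : ℕ} (Md : Fin d → ℕ) (p : (Fin d → ℤ) → (Fin d → ℤ) → ℝ) : Prop :=
  (∀ x y, 0 ≤ p x y) ∧ (∀ x, HasSum (p x) 1) ∧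
    ∀ (x y : Fin d → ℤ) (i : Fin d), p (x + Pi.single i (Md i : ℤ)) y = p x y

/-- The transition matrix of the induced Markov chain on the torus:
`P a b = ∑_{z : ℤ^d, a + z ∼ b} p_a(z)` (the jump `z` leads from the class `a`
to the class `b` iff `a + (z mod M) = b`). -/
def indMatrix {d : ℕ} (Md : Fin d → ℕ) [∀ i, NeZero (Md i)]
    (p : (Fin d → ℤ) → (Fin d → ℤ) → ℝ) : Matrix (Torus d Md) (Torus d Md) ℝ :=
  Matrix.of fun a b => ∑' z : Fin d → ℤ, if a + projT Md z = b then p (repT Md a) z else 0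

/-- Irreducibility of a finite-state transition matrix: every state can be reached
from every state with positive probability in finitely many (positively many) steps. -/
def MatIrreducible {T : Type*} [Fintype T] [DecidableEq T] (P : Matrix T T ℝ) : Prop :=
  ∀ a b : T, ∃ n : ℕ, 0 < n ∧ 0 < (P ^ n) a b

/-- Aperiodicity of a finite-state transition matrix: for every state, the gcd of
the possible return times is `1`. -/
def MatAperiodic {T : Type*} [Fintype T] [DecidableEq T] (P : Matrix T T ℝ) : Prop :=
  ∀ a : T, ∀ m : ℕ, (∀ n : ℕ, 0 < n → 0 < (P ^ n) a a → m ∣ n) → m = 1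

/-- `π` is a stationary probability distribution for the transition matrix `P`. -/
def IsStationaryDist {T : Type*} [Fintype T] (P : Matrix T T ℝ) (π : T → ℝ) : Prop :=
  (∀ a, 0 ≤ π a) ∧ (∑ a, π a = 1) ∧ ∀ b, ∑ a, π a * P a b = π b

/-- The drift vector `ν = ∑_{x ∈ T} π(x) ∑_{y ∈ ℤ^d} p_x(y) y`. -/
def driftVec {d : ℕ} (Md : Fin d → ℕ) [∀ i, NeZero (Md i)]
    (p : (Fin d → ℤ) → (Fin d → ℤ) → ℝ) (π : Torus d Md → ℝ) : Fin d → ℝ :=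
  fun i => ∑ a : Torus d Md, π a * ∑' y : Fin d → ℤ, p (repT Md a) y * (y i : ℝ)

/-- `μ` is the law of the random walk in the environment `p` started at `x₀`,
as a probability measure on trajectory space: the probability of every cylinder set
is the corresponding product of one-step transition probabilities. -/
def IsRWPELaw {d : ℕ} (p : (Fin d → ℤ) → (Fin d → ℤ) → ℝ) (x₀ : Fin d → ℤ)
    (μ : Measure (ℕ → (Fin d → ℤ))) : Prop :=
  IsProbabilityMeasure μ ∧
    ∀ (n : ℕ) (x : ℕ → (Fin d → ℤ)),
      μ {ω | ∀ i ≤ n, ω i = x i} =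
        ENNReal.ofReal ((if x 0 = x₀ then (1 : ℝ) else 0) *
          ∏ i ∈ Finset.range n, p (x i) (x (i + 1) - x i))

/-- `e` is one of the `2d` unit vectors of `ℤ^d`. -/
def IsUnitVec {d : ℕ} (e : Fin d → ℤ) : Prop :=
  ∃ i : Fin d, e = Pi.single i 1 ∨ e = -Pi.single i 1

/-- The environment is nearest neighbour: only jumps to nearest neighbours have
positive probability. -/
def IsNearestNeighbour {d : ℕ} (p : (Fin d → ℤ) → (Fin d → ℤ) → ℝ) : Prop :=
  ∀ x y, p x y ≠ 0 → IsUnitVec y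

/-- The average negative gradient `g` of the potential,
`g_i = (1/M_i) ∑_{j=0}^{M_i - 1} log (p_{j eᵢ}(eᵢ) / p_{(j+1) eᵢ}(-eᵢ))`. -/
def avgNegGrad {d : ℕ} (Md : Fin d → ℕ) (p : (Fin d → ℤ) → (Fin d → ℤ) → ℝ) :
    Fin d → ℝ :=
  fun i => (Md i : ℝ)⁻¹ * ∑ j ∈ Finset.range (Md i),
    Real.log (p (Pi.single i (j : ℤ)) (Pi.single i 1) /
      p (Pi.single i ((j : ℤ) + 1)) (-Pi.single i 1))

/-- The conditional expected jump `μ_{xy}` of the walk, given that the induced chain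
jumps from `x` to `y`. -/
def condJump {d : ℕ} (Md : Fin d → ℕ) [∀ i, NeZero (Md i)]
    (p : (Fin d → ℤ) → (Fin d → ℤ) → ℝ) (a b : Torus d Md) : Fin d → ℝ :=
  if indMatrix Md p a b = 0 then 0
  else fun i =>
    (∑' z : Fin d → ℤ, if a + projT Md z = b then p (repT Md a) z * (z i : ℝ) else 0) /
      indMatrix Md p a b

def periodSubgroup {G β : Type*} [AddGroup G] (f : G → β) : AddSubgroup G where
  carrier := {v | ∀ x, f (x + v) = f x}
  zero_mem' := by simp
  add_mem' {a b} ha hb x := by rw [← add_assoc, hb (x + a), ha x]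
  neg_mem' {a} ha x := by rw [← ha (x + -a), neg_add_cancel_right]

theorem mem_closure_range_single_of_dvd {ι : Type*} [Fintype ι] [DecidableEq ι] (a : ι → ℤ)
    {m : ι → ℤ} (hm : ∀ i, a i ∣ m i) :
    m ∈ AddSubgroup.closure (Set.range fun i => Pi.single i (a i)) := by
  have hsum : ∑ i, (m i / a i) • (Pi.single i (a i) : ι → ℤ) = m := by
    conv_rhs => rw [← Finset.univ_sum_single m]
    refine Finset.sum_congr rfl fun i _ => ?_
    rw [← Pi.single_smul, smul_eq_mul, Int.ediv_mul_cancel (hm i)]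
  rw [← hsum]
  exact AddSubgroup.sum_mem _ fun i _ =>
    AddSubgroup.zsmul_mem _ (AddSubgroup.subset_closure (Set.mem_range_self i)) _

theorem mem_periodSubgroup_of_dvd {ι β : Type*} [Fintype ι] [DecidableEq ι]
    {f : (ι → ℤ) → β} (a : ι → ℤ) (hf : ∀ i, Pi.single i (a i) ∈ periodSubgroup f)
    {m : ι → ℤ} (hm : ∀ i, a i ∣ m i) : m ∈ periodSubgroup f :=
  (AddSubgroup.closure_le _).2 (Set.range_subset_iff.2 hf) (mem_closure_range_single_of_dvd a hm)

theorem IsPeriodicEnv.single_mem_periodSubgroup {d : ℕ} {Md : Fin d → ℕ}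
    {p : (Fin d → ℤ) → (Fin d → ℤ) → ℝ} (henv : IsPeriodicEnv Md p) (i : Fin d) :
    Pi.single i (Md i : ℤ) ∈ periodSubgroup p :=
  fun x => funext (henv.2.2 x · i)

theorem natCast_mul_avgNegGrad {d : ℕ} (Md : Fin d → ℕ) (p : (Fin d → ℤ) → (Fin d → ℤ) → ℝ)
    (i : Fin d) :
    (Md i : ℝ) * avgNegGrad Md p i = ∑ j ∈ Finset.range (Md i),
      Real.log (p (Pi.single i (j : ℤ)) (Pi.single i 1) /
        p (Pi.single i ((j : ℤ) + 1)) (-Pi.single i 1)) := by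
  rcases eq_or_ne (Md i) 0 with h | h
  · simp [avgNegGrad, h]
  · exact mul_inv_cancel_left₀ (Nat.cast_ne_zero.2 h) _

theorem sum_mul_single_apply {ι : Type*} [Fintype ι] [DecidableEq ι] (g : ι → ℝ) (i : ι)
    (n : ℤ) : ∑ j, g j * ((Pi.single i n : ι → ℤ) j : ℝ) = g i * n := by
  simp [Pi.single_apply]

def IsPotential {d : ℕ} (p : (Fin d → ℤ) → (Fin d → ℤ) → ℝ) (u : (Fin d → ℤ) → ℝ) : Prop :=
  u 0 = 0 ∧ ∀ x e, IsUnitVec e → u x - u (x + e) = Real.log (p x e / p (x + e) (-e))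

namespace IsPotential

variable {d : ℕ} {p : (Fin d → ℤ) → (Fin d → ℤ) → ℝ} {u : (Fin d → ℤ) → ℝ}

theorem sub_add_single_one (hu : IsPotential p u) (x : Fin d → ℤ) (j : Fin d) :
    u x - u (x + Pi.single j 1) =
      Real.log (p x (Pi.single j 1) / p (x + Pi.single j 1) (-Pi.single j 1)) :=
  hu.2 x (Pi.single j 1) ⟨j, Or.inl rfl⟩

theorem add_of_mem_periodSubgroup (hu : IsPotential p u) {v : Fin d → ℤ}
    (hv : v ∈ periodSubgroup p) (x : Fin d → ℤ) : u (x + v) = u x + u v := by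
  set f : (Fin d → ℤ) → ℝ := fun y => u (y + v) - u y
  have hstep (j : Fin d) : Pi.single j 1 ∈ periodSubgroup f := fun y => by
    have h := hu.sub_add_single_one (y + v) j
    rw [add_right_comm, hv, hv] at h
    simp only [f]
    linarith [hu.sub_add_single_one y j]
  have hconst : f (0 + x) = f 0 :=
    mem_periodSubgroup_of_dvd (fun _ => 1) hstep (fun _ => one_dvd _) 0
  simp only [f, zero_add, hu.1, sub_zero] at hconst
  linarith

theorem single_natCast (hu : IsPotential p u) (i : Fin d) (n : ℕ) :
    u (Pi.single i (n : ℤ)) = -∑ j ∈ Finset.range n,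
      Real.log (p (Pi.single i (j : ℤ)) (Pi.single i 1) /
        p (Pi.single i ((j : ℤ) + 1)) (-Pi.single i 1)) := by
  have hstep (j : ℕ) : u (Pi.single i (j : ℤ)) - u (Pi.single i ((j + 1 : ℕ) : ℤ)) =
      Real.log (p (Pi.single i (j : ℤ)) (Pi.single i 1) /
        p (Pi.single i ((j : ℤ) + 1)) (-Pi.single i 1)) := by
    rw [Nat.cast_succ, Pi.single_add, hu.sub_add_single_one]
  simp only [← hstep, Finset.sum_range_sub', Nat.cast_zero, Pi.single_zero, hu.1]
  ring

theorem add_sum_mul_mem_periodSubgroup {Md : Fin d → ℕ} (henv : IsPeriodicEnv Md p)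
    (hu : IsPotential p u) {m : Fin d → ℤ} (hm : ∀ i, (Md i : ℤ) ∣ m i) :
    m ∈ periodSubgroup fun x => u x + ∑ i, avgNegGrad Md p i * (x i : ℝ) := by
  refine mem_periodSubgroup_of_dvd (fun i => (Md i : ℤ)) (fun i x => ?_) hm
  have hsingle : u (Pi.single i (Md i : ℤ)) = -((Md i : ℝ) * avgNegGrad Md p i) := by
    rw [hu.single_natCast, natCast_mul_avgNegGrad]
  simp only [hu.add_of_mem_periodSubgroup (henv.single_mem_periodSubgroup i), Pi.add_apply,
    Int.cast_add, mul_add, Finset.sum_add_distrib, sum_mul_single_apply, hsingle]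
  push_cast
  ring

end IsPotential

theorem potential_periodic_part_general (d : ℕ) (Md : Fin d → ℕ)
    (p : (Fin d → ℤ) → (Fin d → ℤ) → ℝ) (henv : IsPeriodicEnv Md p)
    (u : (Fin d → ℤ) → ℝ) (hu0 : u 0 = 0)
    (hu : ∀ x e, IsUnitVec e → u x - u (x + e) = Real.log (p x e / p (x + e) (-e))) :
    (∀ x m : Fin d → ℤ, (∀ i, (Md i : ℤ) ∣ m i) →
      u (x + m) = u x - ∑ i, avgNegGrad Md p i * (m i : ℝ)) ∧
    (∀ x m : Fin d → ℤ, (∀ i, (Md i : ℤ) ∣ m i) →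
      u (x + m) + ∑ i, avgNegGrad Md p i * ((x + m) i : ℝ) =
        u x + ∑ i, avgNegGrad Md p i * (x i : ℝ)) := by
  have hperiodic (x m : Fin d → ℤ) (hm : ∀ i, (Md i : ℤ) ∣ m i) :
      u (x + m) + ∑ i, avgNegGrad Md p i * ((x + m) i : ℝ) =
        u x + ∑ i, avgNegGrad Md p i * (x i : ℝ) :=
    IsPotential.add_sum_mul_mem_periodSubgroup henv ⟨hu0, hu⟩ hm x
  refine ⟨fun x m hm => ?_, hperiodic⟩
  have h := hperiodic x m hm
  simp only [Pi.add_apply, Int.cast_add, mul_add, Finset.sum_add_distrib] at h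
  linarith

/-- **Linear growth of the potential along the period lattice.** For a reversible
nearest-neighbour periodic environment with potential `u` and average negative
gradient `g`: `u(x + m) = u(x) - ⟨g, m⟩` for every `x ∈ ℤ^d` and every `m` in the
period lattice `M = M₁ℤ × ⋯ × M_dℤ`; in particular the function
`x ↦ u(x) + ⟨g, x⟩` is `M`-periodic. -/
theorem potential_periodic_part (d : ℕ) (hd : 0 < d) (Md : Fin d → ℕ)
    [∀ i, NeZero (Md i)]
    (p : (Fin d → ℤ) → (Fin d → ℤ) → ℝ) (henv : IsPeriodicEnv Md p)
    (hnn : IsNearestNeighbour p) (hpos : ∀ x e, IsUnitVec e → 0 < p x e)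
    (u : (Fin d → ℤ) → ℝ) (hu0 : u 0 = 0)
    (hu : ∀ x e, IsUnitVec e → u x - u (x + e) = Real.log (p x e / p (x + e) (-e))) :
    (∀ x m : Fin d → ℤ, (∀ i, (Md i : ℤ) ∣ m i) →
      u (x + m) = u x - ∑ i, avgNegGrad Md p i * (m i : ℝ)) ∧
    (∀ x m : Fin d → ℤ, (∀ i, (Md i : ℤ) ∣ m i) →
      u (x + m) + ∑ i, avgNegGrad Md p i * ((x + m) i : ℝ) =
        u x + ∑ i, avgNegGrad Md p i * (x i : ℝ)) :=
  potential_periodic_part_general d Md p henv u hu0 hu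
end
end

section
/- Let (X_n) be a reversible nearest-neighbour random walk in periodic environment on Z^d with p_x(e) > 0 for all x and all unit vectors e, with potential u and average negative gradient g ≠ 0. Assume g is appropriate: g has rational coordinates and g_1 := αg ∈ M for some α > 0. Write x ≈ y iff x ∼ y and u(x) = u(y). Let L_0 ⊂ Z^d be any set such that (i) L_0 is a union of ≈-equivalence classes, (ii) sup{ dist(x, H_0) : x ∈ L_0 } < ∞ where H_0 = { v ∈ R^d : ⟨v, g⟩ = 0 }, and (iii) every nearest-neighbour path in Z^d from a point v with ⟨v,g⟩ > sup_{x∈L_0}⟨x,g⟩ to a point w with ⟨w,g⟩ < inf_{x∈L_0}⟨x,g⟩ contains a point of L_0. Set L_k := L_0 + k g_1 for k ∈ Z and τ_k := min{ n ≥ 0 : X_n ∈ L_k }. Then there exists a positive integer k, with L_{−k}, L_0, L_k pairwise disjoint, such that for every x_0 ∈ L_0, P( τ_{−k} < τ_k | X_0 = x_0 ) < 1/2. -/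
open MeasureTheory Filter Topology ProbabilityTheory

noncomputable section

/-- The level hyperplane `L_k = L₀ + k g₁`. -/
def levelSet {d : ℕ} (L0 : Set (Fin d → ℤ)) (g1 : Fin d → ℤ) (k : ℤ) :
    Set (Fin d → ℤ) :=
  (fun y => y + k • g1) '' L0

/-- The first hitting time `τ_L = min {n ≥ 0 : Xₙ ∈ L}` of a set `L ⊆ ℤ^d`
(`⊤` if the set is never hit). -/
def hitTime {d : ℕ} (L : Set (Fin d → ℤ)) (ω : ℕ → (Fin d → ℤ)) : ℕ∞ :=
  sInf {m : ℕ∞ | ∃ n : ℕ, m = (n : ℕ∞) ∧ ω n ∈ L}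

/-!
Let `π` be a stationary law of the walk projected to the torus `ℤ^d / M`. Reversibility,
`p_x(e) e^{u(x+e)} = e^{u(x)} p_{x+e}(-e)`, turns stationarity of `π` into harmonicity of
`F(x) = e^{u(x)} π(x mod M)` for the walk. Since `u + ⟨·, g⟩` is `M`-periodic and `π > 0`, one
has `F ≍ e^{-⟨·, g⟩}`. Decomposing by the first step, the probability of ever reaching a set `A`
is at most `F(x₀) / inf_A F`. If `|⟨·, g⟩| ≤ C` on `L₀`, then `⟨·, g⟩ ≤ C - k ⟨g₁, g⟩` on `L_{-k}`,
so from `L₀` the walk ever reaches `L_{-k}` with probability `O(e^{-k ⟨g₁, g⟩})`, which is below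
`1/2` for large `k`.
-/
open scoped ENNReal

def Function.periods {G β : Type*} [AddGroup G] (f : G → β) : AddSubgroup G where
  carrier := {c | Function.Periodic f c}
  add_mem' := Function.Periodic.add_period
  zero_mem' := fun x => by rw [add_zero]
  neg_mem' := Function.Periodic.neg

section Lattice

variable {d : ℕ} {β : Type*}

lemma Function.Periodic.of_dvd {f : (Fin d → ℤ) → β} {w : Fin d → ℤ}
    (hf : ∀ i, Function.Periodic f (Pi.single i (w i))) {m : Fin d → ℤ} (hm : ∀ i, w i ∣ m i) :
    Function.Periodic f m := by
  change m ∈ Function.periods f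
  rw [← Finset.univ_sum_single m]
  refine AddSubgroup.sum_mem _ fun i _ => ?_
  obtain ⟨c, hc⟩ := hm i
  rw [hc, mul_comm, ← smul_eq_mul, Pi.single_smul]
  exact AddSubgroup.zsmul_mem _ (hf i) c

variable {Md : Fin d → ℕ}

lemma projT_sub (x y : Fin d → ℤ) : projT Md (x - y) = projT Md x - projT Md y := by
  funext i; simp [projT]

variable [∀ i, NeZero (Md i)]

@[simp]
lemma projT_repT (t : Torus d Md) : projT Md (repT Md t) = t := by
  funext i; simp [projT, repT]

lemma apply_repT_projT_of_periodic {f : (Fin d → ℤ) → β}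
    (hf : ∀ i, Function.Periodic f (Pi.single i (Md i : ℤ))) (x : Fin d → ℤ) :
    f (repT Md (projT Md x)) = f x := by
  have hdvd : ∀ i, (Md i : ℤ) ∣ (repT Md (projT Md x) - x) i := fun i => by
    rw [Pi.sub_apply, repT, projT, ZMod.val_intCast]
    exact (Int.mod_modEq (x i) (Md i)).symm.dvd
  simpa using Function.Periodic.of_dvd hf hdvd x

lemma exists_abs_le_of_periodic {f : (Fin d → ℤ) → ℝ}
    (hf : ∀ i, Function.Periodic f (Pi.single i (Md i : ℤ))) : ∃ W, ∀ x, |f x| ≤ W := by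
  obtain ⟨W, hW⟩ := Finite.bddAbove_range fun t : Torus d Md => |f (repT Md t)|
  exact ⟨W, fun x => apply_repT_projT_of_periodic hf x ▸ hW ⟨projT Md x, rfl⟩⟩

end Lattice

section UnitVectors

variable {d : ℕ}

def unitVecs (d : ℕ) : Finset (Fin d → ℤ) :=
  Finset.univ.biUnion fun i => {Pi.single i 1, -Pi.single i 1}

lemma mem_unitVecs {e : Fin d → ℤ} : e ∈ unitVecs d ↔ IsUnitVec e := by
  simp [unitVecs, IsUnitVec]

lemma IsUnitVec.neg {e : Fin d → ℤ} (he : IsUnitVec e) : IsUnitVec (-e) := by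
  obtain ⟨i, h | h⟩ := he
  · exact ⟨i, Or.inr (by rw [h])⟩
  · exact ⟨i, Or.inl (by rw [h, neg_neg])⟩

lemma neg_mem_unitVecs {e : Fin d → ℤ} : -e ∈ unitVecs d ↔ e ∈ unitVecs d :=
  ⟨fun h => neg_neg e ▸ mem_unitVecs.2 (mem_unitVecs.1 h).neg,
    fun h => mem_unitVecs.2 (mem_unitVecs.1 h).neg⟩

variable {p : (Fin d → ℤ) → (Fin d → ℤ) → ℝ}

lemma IsNearestNeighbour.eq_zero (hnn : IsNearestNeighbour p) {x e : Fin d → ℤ}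
    (he : e ∉ unitVecs d) : p x e = 0 := by
  by_contra h
  exact he (mem_unitVecs.2 (hnn x e h))

lemma IsNearestNeighbour.sum_unitVecs (hnn : IsNearestNeighbour p) {x : Fin d → ℤ}
    (hx : HasSum (p x) 1) : ∑ e ∈ unitVecs d, p x e = 1 :=
  (hx.unique (hasSum_sum_of_ne_finset_zero fun _ he => hnn.eq_zero he)).symm

lemma IsNearestNeighbour.tsum_ofReal_mul (hnn : IsNearestNeighbour p) (x : Fin d → ℤ)
    (f : (Fin d → ℤ) → ℝ≥0∞) :
    ∑' y, ENNReal.ofReal (p x (y - x)) * f y =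
      ∑ e ∈ unitVecs d, ENNReal.ofReal (p x e) * f (x + e) := by
  rw [← (Equiv.addLeft x).tsum_eq]
  simp only [Equiv.coe_addLeft, add_sub_cancel_left]
  exact tsum_eq_sum fun e he => by rw [hnn.eq_zero he, ENNReal.ofReal_zero, zero_mul]

end UnitVectors

theorem exists_isStationaryDist {T : Type*} [Fintype T] [DecidableEq T] [Nonempty T]
    (P : Matrix T T ℝ) (hP : ∀ a b, 0 ≤ P a b) (hrow : ∀ a, ∑ b, P a b = 1) :
    ∃ π, IsStationaryDist P π := by
  -- `P` fixes the constant vector, so `1` is also a left eigenvalue of `P`.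
  have hdet : (P - 1).det = 0 := Matrix.exists_mulVec_eq_zero_iff.mp
    ⟨fun _ => 1, Function.ne_iff.2 ⟨Classical.arbitrary T, one_ne_zero⟩, by
      ext a; simp [Matrix.mulVec, dotProduct, hrow, Matrix.one_apply]⟩
  obtain ⟨v, hv0, hv⟩ := Matrix.exists_vecMul_eq_zero_iff.mpr hdet
  have hfix : ∀ b, ∑ a, v a * P a b = v b := fun b => by
    rw [Matrix.vecMul_sub, Matrix.vecMul_one, sub_eq_zero] at hv
    exact congrFun hv b
  -- `|v|` is subinvariant, and its total mass is preserved, so it is invariant.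
  have hsub : ∀ b, |v b| ≤ ∑ a, |v a| * P a b := fun b => by
    calc |v b| = |∑ a, v a * P a b| := by rw [hfix]
      _ ≤ ∑ a, |v a * P a b| := Finset.abs_sum_le_sum_abs _ _
      _ = ∑ a, |v a| * P a b := by simp_rw [abs_mul, abs_of_nonneg (hP _ _)]
  have hmass : ∑ b, |v b| = ∑ b, ∑ a, |v a| * P a b := by
    rw [Finset.sum_comm]; simp_rw [← Finset.mul_sum, hrow, mul_one]
  have hinv : ∀ b, ∑ a, |v a| * P a b = |v b| := fun b =>
    ((Finset.sum_eq_sum_iff_of_le fun b _ => hsub b).1 hmass b (Finset.mem_univ b)).symm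
  have hpos : 0 < ∑ a, |v a| := by
    obtain ⟨a, ha⟩ := Function.ne_iff.1 hv0
    exact Finset.sum_pos' (fun a _ => abs_nonneg _) ⟨a, Finset.mem_univ a, abs_pos.2 ha⟩
  refine ⟨fun a => |v a| / ∑ b, |v b|, fun a => by positivity, ?_, fun b => ?_⟩
  · rw [← Finset.sum_div, div_self hpos.ne']
  · simp_rw [div_mul_eq_mul_div, ← Finset.sum_div, hinv]

section TorusChain

variable {d : ℕ} {Md : Fin d → ℕ} {p : (Fin d → ℤ) → (Fin d → ℤ) → ℝ}

lemma IsPeriodicEnv.periodic_single (henv : IsPeriodicEnv Md p) (i : Fin d) :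
    Function.Periodic p (Pi.single i (Md i : ℤ)) :=
  fun x => funext fun y => henv.2.2 x y i

lemma IsPeriodicEnv.periodic (henv : IsPeriodicEnv Md p) {m : Fin d → ℤ}
    (hm : ∀ i, (Md i : ℤ) ∣ m i) : Function.Periodic p m :=
  Function.Periodic.of_dvd henv.periodic_single hm

variable [∀ i, NeZero (Md i)]

lemma indMatrix_eq_sum (hnn : IsNearestNeighbour p) (a b : Torus d Md) :
    indMatrix Md p a b =
      ∑ e ∈ unitVecs d, if a + projT Md e = b then p (repT Md a) e else 0 :=
  tsum_eq_sum fun e he => by rw [hnn.eq_zero he, ite_self]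

lemma indMatrix_nonneg (henv : IsPeriodicEnv Md p) (a b : Torus d Md) :
    0 ≤ indMatrix Md p a b :=
  tsum_nonneg fun _ => by split_ifs <;> simp [henv.1]

lemma indMatrix_row_sum (henv : IsPeriodicEnv Md p) (hnn : IsNearestNeighbour p)
    (a : Torus d Md) : ∑ b, indMatrix Md p a b = 1 := by
  simp_rw [indMatrix_eq_sum hnn]
  rw [Finset.sum_comm]
  simpa using hnn.sum_unitVecs (henv.2.1 _)

variable {π : Torus d Md → ℝ}

lemma IsStationaryDist.sum_unitVecs (henv : IsPeriodicEnv Md p) (hnn : IsNearestNeighbour p)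
    (hπ : IsStationaryDist (indMatrix Md p) π) (x : Fin d → ℤ) :
    ∑ e ∈ unitVecs d, π (projT Md (x - e)) * p (x - e) e = π (projT Md x) := by
  rw [← hπ.2.2]
  simp_rw [indMatrix_eq_sum hnn, Finset.mul_sum, mul_ite, mul_zero]
  rw [Finset.sum_comm]
  refine Finset.sum_congr rfl fun e _ => ?_
  rw [Finset.sum_eq_single_of_mem (projT Md (x - e)) (Finset.mem_univ _) fun a _ ha =>
    if_neg fun h => ha (by rw [projT_sub, ← h, add_sub_cancel_right])]
  rw [if_pos (by rw [projT_sub, sub_add_cancel]),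
    apply_repT_projT_of_periodic henv.periodic_single]

lemma IsStationaryDist.pos (henv : IsPeriodicEnv Md p) (hnn : IsNearestNeighbour p)
    (hpos : ∀ x e, IsUnitVec e → 0 < p x e) (hπ : IsStationaryDist (indMatrix Md p) π)
    (t : Torus d Md) : 0 < π t := by
  have hstep : ∀ x e, e ∈ unitVecs d → 0 < π (projT Md x) → 0 < π (projT Md (x + e)) := by
    intro x e he hx
    rw [← hπ.sum_unitVecs henv hnn]
    refine lt_of_lt_of_le ?_
      (Finset.single_le_sum (fun e' _ => mul_nonneg (hπ.1 _) (henv.1 _ _)) he)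
    rw [add_sub_cancel_right]
    exact mul_pos hx (hpos x e (mem_unitVecs.1 he))
  -- positivity of `π ∘ projT` is invariant under unit steps, hence under all translations
  have hper : ∀ i, Function.Periodic (fun x => 0 < π (projT Md x)) (Pi.single i 1) := by
    intro i x
    have he : Pi.single i 1 ∈ unitVecs d := mem_unitVecs.2 ⟨i, Or.inl rfl⟩
    have hne : -Pi.single i 1 ∈ unitVecs d := mem_unitVecs.2 ⟨i, Or.inr rfl⟩
    refine propext ⟨fun h => ?_, hstep x _ he⟩
    have := hstep (x + Pi.single i 1) _ hne h
    rwa [add_neg_cancel_right] at this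
  obtain ⟨t₀, -, ht₀⟩ := Finset.exists_lt_of_sum_lt (f := 0) (s := Finset.univ) <| by
    rw [hπ.2.1]; simp
  have := Function.Periodic.of_dvd hper (fun _ => one_dvd _) (repT Md t₀)
    (m := repT Md t - repT Md t₀)
  simp only [projT_repT, add_sub_cancel] at this
  exact this ▸ ht₀

end TorusChain

section Potential

variable {d : ℕ}

def pairing (g : Fin d → ℝ) : (Fin d → ℤ) →+ ℝ where
  toFun x := ∑ i, g i * x i
  map_zero' := by simp
  map_add' x y := by simp [mul_add, Finset.sum_add_distrib]

lemma pairing_single (g : Fin d → ℝ) (i : Fin d) (c : ℤ) :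
    pairing g (Pi.single i c) = g i * c := by
  simp [pairing, Pi.single_apply]

variable {Md : Fin d → ℕ} {p : (Fin d → ℤ) → (Fin d → ℤ) → ℝ} {u : (Fin d → ℤ) → ℝ}

lemma potential_add_period_sub (henv : IsPeriodicEnv Md p)
    (hu : ∀ x e, IsUnitVec e → u x - u (x + e) = Real.log (p x e / p (x + e) (-e)))
    {m : Fin d → ℤ} (hm : ∀ i, (Md i : ℤ) ∣ m i) (x : Fin d → ℤ) :
    u (x + m) - u x = u m - u 0 := by
  -- the increments of `u` along unit steps are determined by `p`, hence `M`-periodic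
  have hper : ∀ j, Function.Periodic (fun z => u (z + m) - u z) (Pi.single j 1) := by
    intro j z
    have he : IsUnitVec (Pi.single j (1 : ℤ)) := ⟨j, Or.inl rfl⟩
    have h := hu (z + m) _ he
    rw [add_right_comm, henv.periodic hm, henv.periodic hm, ← hu z _ he] at h
    simp only
    linarith
  simpa using Function.Periodic.of_dvd hper (m := x) (fun _ => one_dvd _) 0

variable [∀ i, NeZero (Md i)]

lemma potential_single_sub_zero
    (hu : ∀ x e, IsUnitVec e → u x - u (x + e) = Real.log (p x e / p (x + e) (-e)))
    (i : Fin d) : u (Pi.single i (Md i : ℤ)) - u 0 = -(Md i * avgNegGrad Md p i) := by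
  have hMd : (Md i : ℝ) ≠ 0 := Nat.cast_ne_zero.2 (NeZero.ne _)
  have hstep : ∀ j : ℕ, u (Pi.single i (j : ℤ)) - u (Pi.single i ((j + 1 : ℕ) : ℤ)) =
      Real.log (p (Pi.single i (j : ℤ)) (Pi.single i 1) /
        p (Pi.single i ((j : ℤ) + 1)) (-Pi.single i 1)) := fun j => by
    rw [Nat.cast_succ, Pi.single_add]
    exact hu _ _ ⟨i, Or.inl rfl⟩
  rw [avgNegGrad, ← mul_assoc, mul_inv_cancel₀ hMd, one_mul, ← Finset.sum_congr rfl
    fun j _ => hstep j, Finset.sum_range_sub' (fun j : ℕ => u (Pi.single i (j : ℤ)))]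
  simp

lemma exists_abs_potential_add_pairing_le (henv : IsPeriodicEnv Md p)
    (hu : ∀ x e, IsUnitVec e → u x - u (x + e) = Real.log (p x e / p (x + e) (-e))) :
    ∃ W, ∀ x, |u x + pairing (avgNegGrad Md p) x| ≤ W := by
  refine exists_abs_le_of_periodic (Md := Md) fun i x => ?_
  have hm : ∀ j, (Md j : ℤ) ∣ (Pi.single i (Md i : ℤ) : Fin d → ℤ) j := fun j => by
    rcases eq_or_ne j i with rfl | h <;> simp [*]
  have h := potential_add_period_sub henv hu hm x
  rw [potential_single_sub_zero hu i] at h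
  simp only [map_add, pairing_single, Int.cast_natCast]
  linarith

end Potential

section Harmonic

variable {d : ℕ} {Md : Fin d → ℕ} [∀ i, NeZero (Md i)] {p : (Fin d → ℤ) → (Fin d → ℤ) → ℝ}
  {u : (Fin d → ℤ) → ℝ}

lemma mul_exp_potential_eq (hpos : ∀ x e, IsUnitVec e → 0 < p x e)
    (hu : ∀ x e, IsUnitVec e → u x - u (x + e) = Real.log (p x e / p (x + e) (-e)))
    {x e : Fin d → ℤ} (he : IsUnitVec e) :
    p x e * Real.exp (u (x + e)) = Real.exp (u x) * p (x + e) (-e) := by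
  have hp := hpos (x + e) (-e) he.neg
  have h : Real.exp (u x) = Real.exp (u (x + e)) * (p x e / p (x + e) (-e)) := by
    rw [← Real.exp_log (div_pos (hpos x e he) hp), ← hu x e he, ← Real.exp_add]
    ring_nf
  rw [h]
  field_simp

lemma exp_potential_mul_harmonic (henv : IsPeriodicEnv Md p) (hnn : IsNearestNeighbour p)
    (hpos : ∀ x e, IsUnitVec e → 0 < p x e)
    (hu : ∀ x e, IsUnitVec e → u x - u (x + e) = Real.log (p x e / p (x + e) (-e)))
    {π : Torus d Md → ℝ} (hπ : IsStationaryDist (indMatrix Md p) π) (x : Fin d → ℤ) :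
    ∑ e ∈ unitVecs d, p x e * (Real.exp (u (x + e)) * π (projT Md (x + e))) =
      Real.exp (u x) * π (projT Md x) := by
  calc _ = Real.exp (u x) * ∑ e ∈ unitVecs d, π (projT Md (x + e)) * p (x + e) (-e) := by
        rw [Finset.mul_sum]
        refine Finset.sum_congr rfl fun e he => ?_
        rw [← mul_assoc, mul_exp_potential_eq hpos hu (mem_unitVecs.1 he)]
        ring
    _ = Real.exp (u x) * ∑ e ∈ unitVecs d, π (projT Md (x - e)) * p (x - e) e := by
        congr 1
        exact Finset.sum_equiv (Equiv.neg _) (fun e => neg_mem_unitVecs.symm)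
          fun e _ => by simp [sub_eq_add_neg]
    _ = _ := by rw [hπ.sum_unitVecs henv hnn]

end Harmonic

section MarkovChain

variable {α : Type*} (q : α → α → ℝ) (A : Set α)

def IsChainLaw [DecidableEq α] [MeasurableSpace α] (x₀ : α) (μ : Measure (ℕ → α)) : Prop :=
  ∀ (n : ℕ) (x : ℕ → α), μ {ω | ∀ i ≤ n, ω i = x i} =
    ENNReal.ofReal ((if x 0 = x₀ then 1 else 0) * ∏ i ∈ Finset.range n, q (x i) (x (i + 1)))

/-- The paths are encoded by their starting point and the `n` points visited after it. -/
def pathWeight : (n : ℕ) → α → (Fin n → α) → ℝ≥0∞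
  | 0, _, _ => 1
  | n + 1, x, γ => ENNReal.ofReal (q x (γ 0)) * pathWeight n (γ 0) (Fin.tail γ)

def FirstHitsAt : (n : ℕ) → α → (Fin n → α) → Prop
  | 0, x, _ => x ∈ A
  | n + 1, x, γ => x ∉ A ∧ FirstHitsAt n (γ 0) (Fin.tail γ)

def firstHitProb (n : ℕ) (x : α) : ℝ≥0∞ :=
  ∑' γ, {γ | FirstHitsAt A n x γ}.indicator (pathWeight q n x) γ

def pathPrefix (n : ℕ) (ω : ℕ → α) : α × (Fin n → α) :=
  (ω 0, fun i => ω (i + 1))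

variable {q A}

lemma firstHitProb_zero (x : α) : firstHitProb q A 0 x = A.indicator 1 x := by
  by_cases hx : x ∈ A <;> simp [firstHitProb, FirstHitsAt, pathWeight, hx]

lemma firstHitProb_succ (n : ℕ) (x : α) :
    firstHitProb q A (n + 1) x =
      Aᶜ.indicator (fun x => ∑' y, ENNReal.ofReal (q x y) * firstHitProb q A n y) x := by
  classical
  rw [firstHitProb, ← (Fin.consEquiv fun _ => α).tsum_eq, ENNReal.tsum_prod']
  by_cases hx : x ∈ A
  · simp [FirstHitsAt, hx]
  · simp only [Set.indicator_of_mem (Set.mem_compl hx), firstHitProb, ← ENNReal.tsum_mul_left]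
    refine tsum_congr fun y => tsum_congr fun γ => ?_
    simp only [Fin.consEquiv, Equiv.coe_fn_mk]
    rw [Set.indicator_apply, Set.indicator_apply]
    simp only [Set.mem_ofPred_eq, FirstHitsAt, pathWeight, Fin.cons_zero, Fin.tail_cons, hx,
      not_false_eq_true, true_and, mul_ite, mul_zero]

lemma firstHitsAt_pathPrefix_iff {n : ℕ} (ω : ℕ → α) :
    FirstHitsAt A n (pathPrefix n ω).1 (pathPrefix n ω).2 ↔ ω n ∈ A ∧ ∀ j < n, ω j ∉ A := by
  induction n generalizing ω with
  | zero => simp [FirstHitsAt, pathPrefix]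
  | succ n ih =>
    change ω 0 ∉ A ∧ FirstHitsAt A n (pathPrefix n fun i => ω (i + 1)).1
      (pathPrefix n fun i => ω (i + 1)).2 ↔ _
    rw [ih, Nat.forall_lt_succ_left]
    tauto

lemma pathWeight_pathPrefix {n : ℕ} (ω : ℕ → α) :
    pathWeight q n (pathPrefix n ω).1 (pathPrefix n ω).2 =
      ∏ i ∈ Finset.range n, ENNReal.ofReal (q (ω i) (ω (i + 1))) := by
  induction n generalizing ω with
  | zero => simp [pathWeight]
  | succ n ih =>
    rw [Finset.prod_range_succ', ← ih (fun i => ω (i + 1)), mul_comm]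
    rfl

lemma preimage_pathPrefix (n : ℕ) (ω : ℕ → α) :
    pathPrefix n ⁻¹' {pathPrefix n ω} = {ω' | ∀ i ≤ n, ω' i = ω i} := by
  ext ω'
  simp only [Set.mem_preimage, Set.mem_singleton_iff, pathPrefix, Prod.ext_iff, funext_iff,
    Set.mem_ofPred_eq]
  refine ⟨fun ⟨h0, hs⟩ i hi => ?_, fun h => ⟨h 0 (Nat.zero_le n), fun i => h _ i.2⟩⟩
  cases i with
  | zero => exact h0
  | succ i => exact hs ⟨i, by omega⟩

variable [DecidableEq α] [MeasurableSpace α] {x₀ : α} {μ : Measure (ℕ → α)}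

lemma IsChainLaw.measure_preimage_pathPrefix (hq : ∀ x y, 0 ≤ q x y) (hμ : IsChainLaw q x₀ μ)
    (n : ℕ) (ω : ℕ → α) :
    μ (pathPrefix n ⁻¹' {pathPrefix n ω}) =
      (if ω 0 = x₀ then 1 else 0) * pathWeight q n (pathPrefix n ω).1 (pathPrefix n ω).2 := by
  rw [preimage_pathPrefix, hμ, ENNReal.ofReal_mul (by positivity),
    ENNReal.ofReal_prod_of_nonneg fun i _ => hq _ _, pathWeight_pathPrefix]
  split_ifs <;> simp

lemma IsChainLaw.measure_firstHit_le [Countable α] (hq : ∀ x y, 0 ≤ q x y)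
    (hμ : IsChainLaw q x₀ μ) (n : ℕ) :
    μ {ω | ω n ∈ A ∧ ∀ j < n, ω j ∉ A} ≤ firstHitProb q A n x₀ := by
  classical
  set E := {ω : ℕ → α | ω n ∈ A ∧ ∀ j < n, ω j ∉ A}
  have hbound : ∀ c : α × (Fin n → α), μ (pathPrefix n ⁻¹' {c} ∩ E) ≤
      if c.1 = x₀ then {γ | FirstHitsAt A n x₀ γ}.indicator (pathWeight q n x₀) c.2 else 0 := by
    intro c
    rcases Set.eq_empty_or_nonempty (pathPrefix n ⁻¹' {c} ∩ E) with h | ⟨ω, rfl, hω⟩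
    · simp [h]
    refine (measure_mono Set.inter_subset_left).trans ?_
    rw [hμ.measure_preimage_pathPrefix hq]
    have hω' := (firstHitsAt_pathPrefix_iff ω).2 hω
    by_cases h0 : ω 0 = x₀
    · subst h0
      simp only [pathPrefix, if_true, one_mul]
      exact (Set.indicator_of_mem hω' _).ge
    · simp [pathPrefix, h0]
  calc μ E ≤ μ (⋃ c, pathPrefix n ⁻¹' {c} ∩ E) := measure_mono fun ω hω =>
        Set.mem_iUnion.2 ⟨pathPrefix n ω, rfl, hω⟩
    _ ≤ ∑' c, μ (pathPrefix n ⁻¹' {c} ∩ E) := measure_iUnion_le _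
    _ ≤ _ := ENNReal.tsum_le_tsum hbound
    _ = firstHitProb q A n x₀ := by
        rw [ENNReal.tsum_prod', ENNReal.tsum_comm]
        exact tsum_congr fun γ => tsum_ite_eq x₀ _

end MarkovChain

section Reach

variable {α : Type*} {q : α → α → ℝ} {A : Set α}

lemma mul_sum_firstHitProb_le (F : α → ℝ≥0∞)
    (hF : ∀ x, ∑' y, ENNReal.ofReal (q x y) * F y ≤ F x) {m : ℝ≥0∞} (hm : ∀ x ∈ A, m ≤ F x)
    (N : ℕ) (x : α) : m * ∑ n ∈ Finset.range N, firstHitProb q A n x ≤ F x := by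
  induction N generalizing x with
  | zero => simp
  | succ N ih =>
    rw [Finset.sum_range_succ', firstHitProb_zero]
    simp_rw [firstHitProb_succ]
    by_cases hx : x ∈ A
    · simpa [hx] using hm x hx
    simp only [Set.indicator_of_mem (Set.mem_compl hx), Set.indicator_of_notMem hx, add_zero]
    calc m * ∑ n ∈ Finset.range N, ∑' y, ENNReal.ofReal (q x y) * firstHitProb q A n y
        = ∑' y, ENNReal.ofReal (q x y) * (m * ∑ n ∈ Finset.range N, firstHitProb q A n y) := by
          rw [← Summable.tsum_finsetSum fun _ _ => ENNReal.summable, ← ENNReal.tsum_mul_left]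
          refine tsum_congr fun y => ?_
          simp_rw [Finset.mul_sum]
          exact Finset.sum_congr rfl fun n _ => mul_left_comm _ _ _
      _ ≤ ∑' y, ENNReal.ofReal (q x y) * F y :=
          ENNReal.tsum_le_tsum fun y => by gcongr; exact ih y
      _ ≤ F x := hF x

lemma mul_tsum_firstHitProb_le (F : α → ℝ≥0∞)
    (hF : ∀ x, ∑' y, ENNReal.ofReal (q x y) * F y ≤ F x) {m : ℝ≥0∞} (hm : ∀ x ∈ A, m ≤ F x)
    (x : α) : m * ∑' n, firstHitProb q A n x ≤ F x := by
  rw [ENNReal.tsum_eq_iSup_nat, ENNReal.mul_iSup]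
  exact iSup_le fun N => mul_sum_firstHitProb_le F hF hm N x

variable [DecidableEq α] [MeasurableSpace α] [Countable α] {x₀ : α} {μ : Measure (ℕ → α)}

theorem IsChainLaw.mul_measure_reach_le (hq : ∀ x y, 0 ≤ q x y) (hμ : IsChainLaw q x₀ μ)
    (F : α → ℝ≥0∞) (hF : ∀ x, ∑' y, ENNReal.ofReal (q x y) * F y ≤ F x) {m : ℝ≥0∞}
    (hm : ∀ x ∈ A, m ≤ F x) : m * μ {ω | ∃ n, ω n ∈ A} ≤ F x₀ := by
  classical
  have hcover : {ω : ℕ → α | ∃ n, ω n ∈ A} ⊆ ⋃ n, {ω | ω n ∈ A ∧ ∀ j < n, ω j ∉ A} :=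
    fun ω hω => Set.mem_iUnion.2 ⟨Nat.find hω, Nat.find_spec hω, fun _ hj => Nat.find_min hω hj⟩
  calc m * μ {ω | ∃ n, ω n ∈ A} ≤ m * ∑' n, firstHitProb q A n x₀ := by
        gcongr
        exact (measure_mono hcover).trans <| (measure_iUnion_le _).trans <|
          ENNReal.tsum_le_tsum fun n => hμ.measure_firstHit_le hq n
    _ ≤ F x₀ := mul_tsum_firstHitProb_le F hF hm x₀

end Reach

section GamblersRuin

variable {d : ℕ} {Md : Fin d → ℕ} {p : (Fin d → ℤ) → (Fin d → ℤ) → ℝ}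
  {x₀ : Fin d → ℤ} {μ : Measure (ℕ → (Fin d → ℤ))}

lemma IsStationaryDist.le_one {T : Type*} [Fintype T] {P : Matrix T T ℝ} {π : T → ℝ}
    (hπ : IsStationaryDist P π) (t : T) : π t ≤ 1 :=
  hπ.2.1 ▸ Finset.single_le_sum (fun a _ => hπ.1 a) (Finset.mem_univ t)

lemma IsRWPELaw.measure_reach_le (henv : IsPeriodicEnv Md p) (hnn : IsNearestNeighbour p)
    (hμ : IsRWPELaw p x₀ μ) {F : (Fin d → ℤ) → ℝ} (hF0 : ∀ x, 0 ≤ F x)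
    (hF : ∀ x, ∑ e ∈ unitVecs d, p x e * F (x + e) = F x) {A : Set (Fin d → ℤ)} {m : ℝ}
    (hm0 : 0 < m) (hm : ∀ y ∈ A, m ≤ F y) :
    μ {ω | ∃ n, ω n ∈ A} ≤ ENNReal.ofReal (F x₀ / m) := by
  have hchain : IsChainLaw (fun x y => p x (y - x)) x₀ μ := hμ.2
  have h := hchain.mul_measure_reach_le (fun x y => henv.1 x (y - x))
    (fun x => ENNReal.ofReal (F x)) (fun x => ?_) fun y hy => ENNReal.ofReal_le_ofReal (hm y hy)
  · rw [ENNReal.ofReal_div_of_pos hm0, ENNReal.le_div_iff_mul_le (Or.inl (by simpa using hm0))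
      (Or.inl ENNReal.ofReal_ne_top), mul_comm]
    exact h
  · rw [hnn.tsum_ofReal_mul, ← hF x,
      ENNReal.ofReal_sum_of_nonneg fun e _ => mul_nonneg (henv.1 _ _) (hF0 _)]
    simp_rw [ENNReal.ofReal_mul (henv.1 _ _), le_rfl]

variable [∀ i, NeZero (Md i)] {u : (Fin d → ℤ) → ℝ}

theorem exists_measure_reach_le_exp (henv : IsPeriodicEnv Md p) (hnn : IsNearestNeighbour p)
    (hpos : ∀ x e, IsUnitVec e → 0 < p x e)
    (hu : ∀ x e, IsUnitVec e → u x - u (x + e) = Real.log (p x e / p (x + e) (-e))) :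
    ∃ K : ℝ, 0 < K ∧ ∀ (x₀ : Fin d → ℤ) (μ : Measure (ℕ → (Fin d → ℤ))), IsRWPELaw p x₀ μ →
      ∀ (A : Set (Fin d → ℤ)) (t : ℝ), (∀ y ∈ A, pairing (avgNegGrad Md p) y ≤ t) →
        μ {ω | ∃ n, ω n ∈ A} ≤
          ENNReal.ofReal (K * Real.exp (t - pairing (avgNegGrad Md p) x₀)) := by
  obtain ⟨π, hπ⟩ := exists_isStationaryDist (indMatrix Md p) (indMatrix_nonneg henv)
    (indMatrix_row_sum henv hnn)
  obtain ⟨t₀, ht₀⟩ := Finite.exists_min π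
  have hπt₀ := hπ.pos henv hnn hpos t₀
  obtain ⟨W, hW⟩ := exists_abs_potential_add_pairing_le henv hu
  refine ⟨Real.exp (2 * W) / π t₀, by positivity, fun x₀ μ hμ A t hA => ?_⟩
  set φ := pairing (avgNegGrad Md p)
  set F := fun x => Real.exp (u x) * π (projT Md x)
  have hm : ∀ y ∈ A, Real.exp (-W - t) * π t₀ ≤ F y := fun y hy => by
    have := (abs_le.1 (hW y)).1
    have := hA y hy
    exact mul_le_mul (Real.exp_le_exp.2 (by linarith)) (ht₀ _) hπt₀.le (Real.exp_pos _).le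
  have hFx₀ : F x₀ ≤ Real.exp (W - φ x₀) := by
    have := (abs_le.1 (hW x₀)).2
    calc F x₀ ≤ Real.exp (u x₀) * 1 :=
          mul_le_mul_of_nonneg_left (hπ.le_one _) (Real.exp_pos _).le
      _ ≤ _ := by rw [mul_one]; exact Real.exp_le_exp.2 (by linarith)
  refine (hμ.measure_reach_le henv hnn
    (fun x => (mul_pos (Real.exp_pos _) (hπ.pos henv hnn hpos _)).le)
    (exp_potential_mul_harmonic henv hnn hpos hu hπ) (by positivity) hm).trans
    (ENNReal.ofReal_le_ofReal ?_)
  rw [div_le_iff₀ (by positivity)]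
  refine hFx₀.trans (le_of_eq ?_)
  rw [div_mul_eq_mul_div, div_mul_eq_mul_div, mul_div_assoc, mul_div_cancel_right₀ _ hπt₀.ne',
    ← Real.exp_add, ← Real.exp_add]
  ring_nf

end GamblersRuin

section LevelSets

variable {d : ℕ} {g : Fin d → ℝ} {L0 : Set (Fin d → ℤ)} {C : ℝ} {g1 : Fin d → ℤ}

lemma pairing_pos {α : ℝ} (hg : g ≠ 0) (hα : 0 < α) (hg1 : ∀ i, (g1 i : ℝ) = α * g i) :
    0 < pairing g g1 := by
  have h : pairing g g1 = α * ∑ i, g i ^ 2 := by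
    simp only [pairing, AddMonoidHom.coe_mk, ZeroHom.coe_mk, hg1, Finset.mul_sum]
    exact Finset.sum_congr rfl fun i _ => by ring
  obtain ⟨i, hi⟩ := Function.ne_iff.1 hg
  rw [h]
  exact mul_pos hα
    (Finset.sum_pos' (fun i _ => sq_nonneg _) ⟨i, Finset.mem_univ i, sq_pos_of_ne_zero hi⟩)

lemma levelSet_zero : levelSet L0 g1 0 = L0 := by
  simp [levelSet]

lemma abs_pairing_sub_le_of_mem_levelSet (hC : ∀ x ∈ L0, |pairing g x| ≤ C) {k : ℤ}
    {y : Fin d → ℤ} (hy : y ∈ levelSet L0 g1 k) : |pairing g y - k * pairing g g1| ≤ C := by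
  obtain ⟨x, hx, rfl⟩ := hy
  dsimp only
  rw [map_add, map_zsmul, zsmul_eq_mul, add_sub_cancel_right]
  exact hC x hx

lemma disjoint_levelSet (hC : ∀ x ∈ L0, |pairing g x| ≤ C) {k k' : ℤ}
    (h : 2 * C < (k' - k) * pairing g g1) : Disjoint (levelSet L0 g1 k) (levelSet L0 g1 k') :=
  Set.disjoint_left.2 fun y hy hy' => by
    have h₁ := abs_le.1 (abs_pairing_sub_le_of_mem_levelSet hC hy)
    have h₂ := abs_le.1 (abs_pairing_sub_le_of_mem_levelSet hC hy')
    linarith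

end LevelSets

lemma ofReal_mul_exp_lt_half {K s : ℝ} (hK : 0 < K) (hs : s < -Real.log (2 * K)) :
    ENNReal.ofReal (K * Real.exp s) < 1 / 2 := by
  rw [ENNReal.ofReal_lt_iff_lt_toReal (by positivity) (by simp)]
  calc K * Real.exp s < K * Real.exp (-Real.log (2 * K)) := by gcongr
    _ = (1 / 2 : ℝ≥0∞).toReal := by
      rw [Real.exp_neg, Real.exp_log (by positivity)]
      field_simp
      simp

lemma exists_mem_of_hitTime_lt {d : ℕ} {A B : Set (Fin d → ℤ)} {ω : ℕ → (Fin d → ℤ)}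
    (h : hitTime A ω < hitTime B ω) : ∃ n, ω n ∈ A := by
  by_contra hA
  have htop : hitTime A ω = ⊤ := sInf_eq_top.2 fun _ ⟨n, _, hn⟩ => absurd ⟨n, hn⟩ hA
  exact not_top_lt (htop ▸ h)

theorem hitting_time_estimate_general (d : ℕ) (Md : Fin d → ℕ)
    [∀ i, NeZero (Md i)]
    (p : (Fin d → ℤ) → (Fin d → ℤ) → ℝ) (henv : IsPeriodicEnv Md p)
    (hnn : IsNearestNeighbour p) (hpos : ∀ x e, IsUnitVec e → 0 < p x e)
    (u : (Fin d → ℤ) → ℝ)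
    (hu : ∀ x e, IsUnitVec e → u x - u (x + e) = Real.log (p x e / p (x + e) (-e)))
    (hg : avgNegGrad Md p ≠ 0)
    (α : ℝ) (hα : 0 < α) (g1 : Fin d → ℤ)
    (hg1 : ∀ i, (g1 i : ℝ) = α * avgNegGrad Md p i)
    (L0 : Set (Fin d → ℤ))
    (hL0bdd : ∃ C : ℝ, ∀ x ∈ L0, |∑ i, avgNegGrad Md p i * (x i : ℝ)| ≤ C)
    (μ : (Fin d → ℤ) → Measure (ℕ → (Fin d → ℤ)))
    (hμ : ∀ x₀, IsRWPELaw p x₀ (μ x₀)) :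
    ∃ k : ℕ, 0 < k ∧
      Disjoint (levelSet L0 g1 (-(k : ℤ))) L0 ∧
      Disjoint L0 (levelSet L0 g1 (k : ℤ)) ∧
      Disjoint (levelSet L0 g1 (-(k : ℤ))) (levelSet L0 g1 (k : ℤ)) ∧
      ∀ x₀ ∈ L0,
        μ x₀ {ω | hitTime (levelSet L0 g1 (-(k : ℤ))) ω <
          hitTime (levelSet L0 g1 (k : ℤ)) ω} < 1 / 2 := by
  obtain ⟨K, hK0, hK⟩ := exists_measure_reach_le_exp henv hnn hpos hu
  obtain ⟨C, hC⟩ := hL0bdd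
  change ∀ x ∈ L0, |pairing (avgNegGrad Md p) x| ≤ C at hC
  have hG : 0 < pairing (avgNegGrad Md p) g1 := pairing_pos hg hα hg1
  have hkG := tendsto_natCast_atTop_atTop.atTop_mul_const hG
  obtain ⟨k, hk0, hkC, hkK⟩ := ((eventually_gt_atTop 0).and ((hkG.eventually_gt_atTop (2 * C)).and
    (hkG.eventually_gt_atTop (2 * C + Real.log (2 * K))))).exists
  have hkG0 : 0 < (k : ℝ) * pairing (avgNegGrad Md p) g1 := mul_pos (Nat.cast_pos.2 hk0) hG
  refine ⟨k, hk0, ?_, ?_, disjoint_levelSet hC (by push_cast; linarith), fun x₀ hx₀ => ?_⟩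
  · simpa [levelSet_zero] using disjoint_levelSet (k' := 0) hC (by push_cast; linarith)
  · simpa [levelSet_zero] using disjoint_levelSet (k := 0) hC (by push_cast; linarith)
  have hx₀C := abs_le.1 (hC x₀ hx₀)
  calc μ x₀ {ω | hitTime (levelSet L0 g1 (-(k : ℤ))) ω < hitTime (levelSet L0 g1 (k : ℤ)) ω}
      ≤ μ x₀ {ω | ∃ n, ω n ∈ levelSet L0 g1 (-(k : ℤ))} :=
        measure_mono fun ω => exists_mem_of_hitTime_lt
    _ ≤ ENNReal.ofReal (K * Real.exp ((C - k * pairing (avgNegGrad Md p) g1) -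
          pairing (avgNegGrad Md p) x₀)) :=
        hK x₀ _ (hμ x₀) _ _ fun y hy => by
          have := abs_le.1 (abs_pairing_sub_le_of_mem_levelSet hC hy)
          push_cast at this
          linarith
    _ < 1 / 2 := ofReal_mul_exp_lt_half hK0 (by linarith)

/-- **Hitting-time estimate for the level hyperplanes.** Let the environment be a
reversible nearest-neighbour periodic environment with everywhere positive one-step
probabilities, potential `u` and average negative gradient `g ≠ 0`, where `g` is
appropriate: it has rational coordinates and `g₁ := α g` lies in the period lattice
`M` for some `α > 0`. Let `L₀ ⊆ ℤ^d` be a union of `≈`-equivalence classes (where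
`x ≈ y` iff `x ∼ y` and `u(x) = u(y)`) whose points lie at bounded distance from the
hyperplane `H₀ = {⟨·, g⟩ = 0}` and which disconnects `ℤ^d`: every nearest-neighbour
path from the side `{⟨·,g⟩ > sup_{L₀} ⟨·,g⟩}` to the side `{⟨·,g⟩ < inf_{L₀} ⟨·,g⟩}`
meets `L₀`. Set `L_k := L₀ + k g₁` and let `τ_k` be the hitting time of `L_k`. Then
there is a positive integer `k` with `L_{-k}, L₀, L_k` pairwise disjoint such that for
every starting point `x₀ ∈ L₀` one has `P(τ_{-k} < τ_k ∣ X₀ = x₀) < 1/2`. -/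
theorem hitting_time_estimate (d : ℕ) (hd : 0 < d) (Md : Fin d → ℕ)
    [∀ i, NeZero (Md i)]
    (p : (Fin d → ℤ) → (Fin d → ℤ) → ℝ) (henv : IsPeriodicEnv Md p)
    (hnn : IsNearestNeighbour p) (hpos : ∀ x e, IsUnitVec e → 0 < p x e)
    (u : (Fin d → ℤ) → ℝ) (hu0 : u 0 = 0)
    (hu : ∀ x e, IsUnitVec e → u x - u (x + e) = Real.log (p x e / p (x + e) (-e)))
    (hg : avgNegGrad Md p ≠ 0)
    (hrat : ∀ i, ∃ q : ℚ, avgNegGrad Md p i = (q : ℝ))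
    (α : ℝ) (hα : 0 < α) (g1 : Fin d → ℤ)
    (hg1 : ∀ i, (g1 i : ℝ) = α * avgNegGrad Md p i)
    (hg1M : ∀ i, (Md i : ℤ) ∣ g1 i)
    (L0 : Set (Fin d → ℤ))
    (hL0cls : ∀ x ∈ L0, ∀ y : Fin d → ℤ,
      (∀ i, (Md i : ℤ) ∣ x i - y i) → u x = u y → y ∈ L0)
    (hL0bdd : ∃ C : ℝ, ∀ x ∈ L0, |∑ i, avgNegGrad Md p i * (x i : ℝ)| ≤ C)
    (hL0sep : ∀ (n : ℕ) (x : Fin (n + 1) → (Fin d → ℤ)),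
      (∀ i : Fin n, IsUnitVec (x i.succ - x i.castSucc)) →
      sSup ((fun y : Fin d → ℤ => ∑ i, avgNegGrad Md p i * (y i : ℝ)) '' L0) <
        ∑ i, avgNegGrad Md p i * (x 0 i : ℝ) →
      (∑ i, avgNegGrad Md p i * (x (Fin.last n) i : ℝ)) <
        sInf ((fun y : Fin d → ℤ => ∑ i, avgNegGrad Md p i * (y i : ℝ)) '' L0) →
      ∃ i : Fin (n + 1), x i ∈ L0)
    (μ : (Fin d → ℤ) → Measure (ℕ → (Fin d → ℤ)))
    (hμ : ∀ x₀, IsRWPELaw p x₀ (μ x₀)) :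
    ∃ k : ℕ, 0 < k ∧
      Disjoint (levelSet L0 g1 (-(k : ℤ))) L0 ∧
      Disjoint L0 (levelSet L0 g1 (k : ℤ)) ∧
      Disjoint (levelSet L0 g1 (-(k : ℤ))) (levelSet L0 g1 (k : ℤ)) ∧
      ∀ x₀ ∈ L0,
        μ x₀ {ω | hitTime (levelSet L0 g1 (-(k : ℤ))) ω <
          hitTime (levelSet L0 g1 (k : ℤ)) ω} < 1 / 2 :=
  hitting_time_estimate_general d Md p henv hnn hpos u hu hg α hα g1 hg1 L0 hL0bdd μ hμ
end
end
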